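/- arXiv:2103.15919 — 2 statements merged into one kernel-verified Lean document; each statement's English description precedes it below -/
import Mathlib

section
/- Let d₁,…,d_K ∈ ℝ^p and let F₁,…,F_L be symmetric positive semidefinite real p×p matrices such that the stacked matrix D̄ has rank p. Let P(β) = ∑_{k=1}^K |dₖᵀβ| + ∑_{ℓ=1}^L √(βᵀ F_ℓ β). Then c := ∫_{ℝ^p} exp(−P(β)) dβ is finite and positive, and for every λ > 0, ∫_{ℝ^p} exp(−λ P(β)) dβ = λ^{−p} · c. In particular, the normalizing constant of the structured sparse prior is proportional to λ^p. -/
open MeasureTheory Matrix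

/-!
The penalty `P` is continuous and positively homogeneous of degree one, and the rank condition
makes it vanish only at `0`: a zero of `P` is annihilated by every `dₖᵀ` and, by positive
semidefiniteness, by every `F_ℓ`, hence by `D̄`. Its minimum on the unit sphere is therefore
positive, so `P β ≥ a ‖β‖` for some `a > 0`, and `exp (-P)` is dominated by the integrable
`exp (-a ‖β‖)`. The scaling law is the substitution `β ↦ λ β`, whose Jacobian is `λ^p`.
-/

section Homogeneous

variable {E : Type*} [NormedAddCommGroup E] [NormedSpace ℝ E] [FiniteDimensional ℝ E]
  {P : E → ℝ}

theorem exists_pos_mul_norm_le_of_homogeneous (hP : Continuous P)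
    (hhom : ∀ c : ℝ, 0 < c → ∀ x, P (c • x) = c * P x) (hpos : ∀ x, x ≠ 0 → 0 < P x) :
    ∃ a : ℝ, 0 < a ∧ ∀ x, a * ‖x‖ ≤ P x := by
  have hP0 : P 0 = 0 := by linarith [show P 0 = 2 * P 0 by simpa using hhom 2 two_pos 0]
  rcases subsingleton_or_nontrivial E with hE | hE
  · exact ⟨1, one_pos, fun x => by simp [Subsingleton.elim x 0, hP0]⟩
  obtain ⟨x₀, hx₀, hmin⟩ := (isCompact_sphere (0 : E) 1).exists_isMinOn
    (NormedSpace.sphere_nonempty.mpr zero_le_one) hP.continuousOn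
  have hx₀ne : x₀ ≠ 0 := ne_zero_of_mem_unit_sphere ⟨x₀, hx₀⟩
  refine ⟨P x₀, hpos x₀ hx₀ne, fun x => ?_⟩
  rcases eq_or_ne x 0 with rfl | hx
  · simp [hP0]
  have hnorm : 0 < ‖x‖ := norm_pos_iff.mpr hx
  have hunit : ‖x‖⁻¹ • x ∈ Metric.sphere (0 : E) 1 := by
    simp [norm_smul, inv_mul_cancel₀ hnorm.ne']
  calc P x₀ * ‖x‖ ≤ P (‖x‖⁻¹ • x) * ‖x‖ := by gcongr; exact hmin hunit
    _ = P x := by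
      rw [hhom _ (inv_pos.mpr hnorm), mul_comm, ← mul_assoc, mul_inv_cancel₀ hnorm.ne', one_mul]

variable [MeasurableSpace E] [BorelSpace E] (μ : Measure E) [μ.IsAddHaarMeasure]

theorem integrable_exp_neg_mul_norm {a : ℝ} (ha : 0 < a) :
    Integrable (fun x : E => Real.exp (-(a * ‖x‖))) μ := by
  rcases subsingleton_or_nontrivial E with hE | hE
  · refine (integrable_const (1 : ℝ)).mono' (by fun_prop) (.of_forall fun x => ?_)
    simp [Subsingleton.elim x 0]
  rw [integrable_fun_norm_addHaar μ (f := fun y => Real.exp (-(a * y)))]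
  refine (integrableOn_rpow_mul_exp_neg_mul_rpow (s := (Module.finrank ℝ E - 1 : ℕ))
    (p := 1) (neg_one_lt_zero.trans_le (Nat.cast_nonneg _)) one_pos ha).congr_fun
    (fun y _ => by simp [Real.rpow_natCast]) measurableSet_Ioi

theorem integrable_exp_neg_of_homogeneous (hP : Continuous P)
    (hhom : ∀ c : ℝ, 0 < c → ∀ x, P (c • x) = c * P x) (hpos : ∀ x, x ≠ 0 → 0 < P x) :
    Integrable (fun x => Real.exp (-P x)) μ := by
  obtain ⟨a, ha, hle⟩ := exists_pos_mul_norm_le_of_homogeneous hP hhom hpos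
  refine (integrable_exp_neg_mul_norm μ ha).mono' (by fun_prop) (.of_forall fun x => ?_)
  rw [Real.norm_of_nonneg (Real.exp_pos _).le, Real.exp_le_exp]
  linarith [hle x]

theorem integral_exp_neg_mul_of_homogeneous (hhom : ∀ c : ℝ, 0 < c → ∀ x, P (c • x) = c * P x)
    {lam : ℝ} (hlam : 0 < lam) :
    ∫ x, Real.exp (-(lam * P x)) ∂μ =
      lam ^ (-(Module.finrank ℝ E : ℤ)) * ∫ x, Real.exp (-P x) ∂μ := by
  simp_rw [← hhom lam hlam]
  rw [Measure.integral_comp_smul μ (fun x => Real.exp (-P x)), smul_eq_mul,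
    abs_of_pos (by positivity), _root_.zpow_neg, zpow_natCast]

end Homogeneous

theorem Matrix.eq_zero_of_mulVec_eq_zero_of_rank_eq_card {m n K : Type*} [Fintype m] [Fintype n]
    [Field K] {A : Matrix m n K} (hA : A.rank = Fintype.card n) {v : n → K} (hv : A *ᵥ v = 0) :
    v = 0 := by
  have hdim := LinearMap.finrank_range_add_finrank_ker A.mulVecLin
  rw [Module.finrank_fintype_fun_eq_card, ← Matrix.rank, hA, add_eq_left,
    Submodule.finrank_eq_zero] at hdim
  simpa [hdim] using (show v ∈ LinearMap.ker A.mulVecLin from hv)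

section Penalty

variable {n ι κ : Type*} [Fintype n] [Fintype ι] [Fintype κ]

noncomputable def structuredPenalty (d : ι → n → ℝ) (F : κ → Matrix n n ℝ) (β : n → ℝ) : ℝ :=
  ∑ k, |d k ⬝ᵥ β| + ∑ ℓ, √(β ⬝ᵥ F ℓ *ᵥ β)

variable (d : ι → n → ℝ) (F : κ → Matrix n n ℝ)

theorem continuous_structuredPenalty : Continuous (structuredPenalty d F) := by
  unfold structuredPenalty dotProduct mulVec
  fun_prop

theorem structuredPenalty_smul {c : ℝ} (hc : 0 ≤ c) (β : n → ℝ) :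
    structuredPenalty d F (c • β) = c * structuredPenalty d F β := by
  simp only [structuredPenalty, mul_add, Finset.mul_sum, dotProduct_smul, mulVec_smul,
    smul_dotProduct, smul_eq_mul, abs_mul, abs_of_nonneg hc, ← mul_assoc,
    Real.sqrt_mul (mul_self_nonneg c), Real.sqrt_mul_self hc]

theorem mulVec_stack_eq_zero_of_structuredPenalty_eq_zero (hF : ∀ ℓ, (F ℓ).PosSemidef)
    {β : n → ℝ} (hβ : structuredPenalty d F β = 0) :
    Matrix.of (Sum.elim d (fun li : κ × n => F li.1 li.2)) *ᵥ β = 0 := by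
  have hquad : ∀ ℓ, 0 ≤ β ⬝ᵥ F ℓ *ᵥ β := fun ℓ => by
    simpa using (hF ℓ).dotProduct_mulVec_nonneg β
  rw [structuredPenalty, add_eq_zero_iff_of_nonneg (by positivity) (by positivity),
    Finset.sum_eq_zero_iff_of_nonneg (fun _ _ => abs_nonneg _),
    Finset.sum_eq_zero_iff_of_nonneg (fun _ _ => Real.sqrt_nonneg _)] at hβ
  obtain ⟨hd, hsqrt⟩ := hβ
  have hFβ : ∀ ℓ, F ℓ *ᵥ β = 0 := fun ℓ =>
    ((hF ℓ).dotProduct_mulVec_zero_iff β).mp <| by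
      simpa using (Real.sqrt_eq_zero (hquad ℓ)).mp (hsqrt ℓ (Finset.mem_univ ℓ))
  funext j
  rcases j with k | ⟨ℓ, i⟩
  · simpa [mulVec, dotProduct] using hd k (Finset.mem_univ k)
  · simpa [mulVec, dotProduct] using congrFun (hFβ ℓ) i

theorem structuredPenalty_pos (hF : ∀ ℓ, (F ℓ).PosSemidef)
    (hrank : (Matrix.of (Sum.elim d (fun li : κ × n => F li.1 li.2))).rank = Fintype.card n)
    {β : n → ℝ} (hβ : β ≠ 0) : 0 < structuredPenalty d F β := by
  have hnonneg : 0 ≤ structuredPenalty d F β := by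
    unfold structuredPenalty; positivity
  refine hnonneg.lt_of_ne fun h => hβ ?_
  exact eq_zero_of_mulVec_eq_zero_of_rank_eq_card hrank
    (mulVec_stack_eq_zero_of_structuredPenalty_eq_zero d F hF h.symm)

end Penalty

theorem structured_sparse_normalizing_constant_general
    (p K L : ℕ)
    (d : Fin K → (Fin p → ℝ))
    (F : Fin L → Matrix (Fin p) (Fin p) ℝ)
    (hFpsd : ∀ ℓ, (F ℓ).PosSemidef)
    (hrank : (Matrix.of (Sum.elim d (fun li : Fin L × Fin p => F li.1 li.2))).rank = p)
    (P : (Fin p → ℝ) → ℝ)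
    (hP : ∀ β, P β = (∑ k, |d k ⬝ᵥ β|) + ∑ ℓ, Real.sqrt (β ⬝ᵥ (F ℓ) *ᵥ β)) :
    Integrable (fun β : Fin p → ℝ => Real.exp (-P β)) volume ∧
      0 < ∫ β : Fin p → ℝ, Real.exp (-P β) ∧
      ∀ lam : ℝ, 0 < lam →
        (∫ β : Fin p → ℝ, Real.exp (-(lam * P β))) =
          lam ^ (-(p : ℤ)) * ∫ β : Fin p → ℝ, Real.exp (-P β) := by
  obtain rfl : P = structuredPenalty d F := funext hP
  have hhom : ∀ c : ℝ, 0 < c → ∀ β, structuredPenalty d F (c • β) = c * structuredPenalty d F β :=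
    fun c hc => structuredPenalty_smul d F hc.le
  have hpos : ∀ β, β ≠ 0 → 0 < structuredPenalty d F β :=
    fun β => structuredPenalty_pos d F hFpsd (by rwa [Fintype.card_fin])
  have hint := integrable_exp_neg_of_homogeneous volume (continuous_structuredPenalty d F) hhom hpos
  refine ⟨hint, integral_exp_pos hint, fun lam hlam => ?_⟩
  simpa using integral_exp_neg_mul_of_homogeneous volume hhom hlam

/-- When the stacked matrix `D̄` has full column rank, the normalizing constant
`c = ∫ exp(−P(β)) dβ` of the structured sparse prior is finite and positive, and for every
`λ > 0`, `∫ exp(−λ P(β)) dβ = λ^{−p} · c`. -/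
theorem structured_sparse_normalizing_constant
    (p K L : ℕ)
    (d : Fin K → (Fin p → ℝ))
    (F : Fin L → Matrix (Fin p) (Fin p) ℝ)
    (hFsymm : ∀ ℓ, (F ℓ).IsSymm)
    (hFpsd : ∀ ℓ, (F ℓ).PosSemidef)
    (hrank : (Matrix.of (Sum.elim d (fun li : Fin L × Fin p => F li.1 li.2))).rank = p)
    (P : (Fin p → ℝ) → ℝ)
    (hP : ∀ β, P β = (∑ k, |d k ⬝ᵥ β|) + ∑ ℓ, Real.sqrt (β ⬝ᵥ (F ℓ) *ᵥ β)) :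
    Integrable (fun β : Fin p → ℝ => Real.exp (-P β)) volume ∧
      0 < ∫ β : Fin p → ℝ, Real.exp (-P β) ∧
      ∀ lam : ℝ, 0 < lam →
        (∫ β : Fin p → ℝ, Real.exp (-(lam * P β))) =
          lam ^ (-(p : ℤ)) * ∫ β : Fin p → ℝ, Real.exp (-P β) :=
  structured_sparse_normalizing_constant_general p K L d F hFpsd hrank P hP
end

section
/- Let λ > 0, let d₁,…,d_K ∈ ℝ^p, and let F₁,…,F_L be symmetric positive semidefinite real p×p matrices. For every β ∈ ℝ^p, ∫_{(0,∞)^{K+L}} exp(−(1/2) ∑_{k=1}^K (dₖᵀβ)²/τ_k − (1/2) ∑_{ℓ=1}^L (βᵀF_ℓβ)/ξ_ℓ) · ∏_{k=1}^K (2πτ_k)^{−1/2} (λ²/2) exp(−λ²τ_k/2) · ∏_{ℓ=1}^L (2πξ_ℓ)^{−1/2} (λ²/2) exp(−λ²ξ_ℓ/2) dτ₁⋯dτ_K dξ₁⋯dξ_L = (λ/2)^{K+L} · exp(−λ(∑_{k=1}^K |dₖᵀβ| + ∑_{ℓ=1}^L √(βᵀF_ℓβ))). That is, integrating the augmented joint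 density of Theorem 3 over the augmentation variables {τ²_k} and {ξ²_ℓ} recovers the structured sparse prior kernel on β. -/
/-!
Conditionally on the scales the integrand factorises into one-dimensional pieces
`exp (-c / (2t)) (2πt)^{-1/2} (λ²/2) exp (-λ²t/2)`, with `c = (dₖᵀβ)²` or `c = βᵀF_ℓβ`,
so it suffices to show that each integrates over `t > 0` to `(λ/2) exp (-λ√c)`: the
Laplace density is a scale mixture of normals. After `t = x²` this is the integral
`∫₀^∞ exp (-(a²/x² + b²x²)) dx = √π / (2b) · exp (-2ab)`, which the Cauchy–Schlömilch
substitution `u = bx - a/x` reduces to the Gaussian integral.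
-/

open MeasureTheory Matrix Real Set

lemma image_div_left_Ioi {r : ℝ} (hr : 0 < r) : (fun x : ℝ => r / x) '' Ioi 0 = Ioi 0 := by
  ext y
  refine ⟨?_, fun hy => ⟨r / y, div_pos hr hy, div_div_cancel₀ hr.ne'⟩⟩
  rintro ⟨x, hx, rfl⟩
  exact div_pos hr hx

lemma integral_Ioi_comp_div_left {E : Type*} [NormedAddCommGroup E] [NormedSpace ℝ E]
    {r : ℝ} (hr : 0 < r) (f : ℝ → E) :
    ∫ x in Ioi 0, (r / x ^ 2) • f (r / x) = ∫ x in Ioi 0, f x := by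
  have hderiv : ∀ x ∈ Ioi (0 : ℝ),
      HasDerivWithinAt (fun x => r / x) (-(r / x ^ 2)) (Ioi 0) x := fun x hx => by
    simpa [div_eq_mul_inv] using ((hasDerivAt_inv (ne_of_gt hx)).const_mul r).hasDerivWithinAt
  have hinj : InjOn (fun x : ℝ => r / x) (Ioi 0) := fun x _ y _ hxy =>
    inv_injective (mul_left_cancel₀ hr.ne' (by simpa [div_eq_mul_inv] using hxy))
  conv_rhs => rw [← image_div_left_Ioi hr,
    integral_image_eq_integral_abs_deriv_smul measurableSet_Ioi hderiv hinj]
  refine setIntegral_congr_fun measurableSet_Ioi fun x hx => ?_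
  rw [abs_neg, abs_of_pos (div_pos hr (pow_pos hx 2))]

section CauchySchlomilch

variable {a b : ℝ}

lemma hasDerivAt_mul_sub_div {x : ℝ} (hx : x ≠ 0) :
    HasDerivAt (fun x => b * x - a / x) (b + a / x ^ 2) x := by
  have h := ((hasDerivAt_id' x).const_mul b).sub ((hasDerivAt_inv hx).const_mul a)
  rw [show b * 1 - a * -(x ^ 2)⁻¹ = b + a / x ^ 2 by ring] at h
  simpa only [div_eq_mul_inv, Pi.sub_def] using h

lemma strictMonoOn_mul_sub_div (ha : 0 < a) (hb : 0 < b) :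
    StrictMonoOn (fun x => b * x - a / x) (Ioi 0) := fun x hx y _ hxy => by
  have := div_lt_div_of_pos_left ha hx hxy
  dsimp only
  nlinarith

lemma image_mul_sub_div_Ioi (ha : 0 < a) (hb : 0 < b) :
    (fun x => b * x - a / x) '' Ioi 0 = univ := by
  refine eq_univ_of_forall fun u => ?_
  set s := √(u ^ 2 + 4 * a * b)
  have hs : s ^ 2 = u ^ 2 + 4 * a * b := sq_sqrt (by positivity)
  have hus : -u < s := by
    have : |u| < s := by
      rw [← sqrt_sq_eq_abs]
      exact sqrt_lt_sqrt (sq_nonneg u) (by nlinarith)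
    linarith [neg_abs_le u]
  obtain ⟨x, hx, hroot⟩ : ∃ x > 0, b * x ^ 2 - u * x - a = 0 := by
    refine ⟨(u + s) / (2 * b), div_pos (by linarith) (by positivity), ?_⟩
    rw [show b * ((u + s) / (2 * b)) ^ 2 - u * ((u + s) / (2 * b)) - a
      = (s ^ 2 - u ^ 2 - 4 * a * b) / (4 * b) by field_simp; ring, hs]
    ring
  refine ⟨x, hx, ?_⟩
  have := hx.ne'
  field_simp
  linarith

lemma integral_eq_integral_Ioi_mul_comp_mul_sub_div (ha : 0 < a) (hb : 0 < b) (g : ℝ → ℝ) :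
    ∫ u, g u = ∫ x in Ioi 0, (b + a / x ^ 2) * g (b * x - a / x) := by
  rw [← setIntegral_univ, ← image_mul_sub_div_Ioi ha hb,
    integral_image_eq_integral_abs_deriv_smul measurableSet_Ioi
      (fun x hx => (hasDerivAt_mul_sub_div (ne_of_gt hx)).hasDerivWithinAt)
      (strictMonoOn_mul_sub_div ha hb).injOn]
  refine setIntegral_congr_fun measurableSet_Ioi fun x (hx : 0 < x) => ?_
  rw [smul_eq_mul, abs_of_pos (by positivity)]

lemma integrableOn_Ioi_mul_comp_mul_sub_div (ha : 0 < a) (hb : 0 < b) {g : ℝ → ℝ}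
    (hg : Integrable g) :
    IntegrableOn (fun x => (b + a / x ^ 2) * g (b * x - a / x)) (Ioi 0) := by
  rw [← integrableOn_univ, ← image_mul_sub_div_Ioi ha hb,
    integrableOn_image_iff_integrableOn_abs_deriv_smul measurableSet_Ioi
      (fun x hx => (hasDerivAt_mul_sub_div (ne_of_gt hx)).hasDerivWithinAt)
      (strictMonoOn_mul_sub_div ha hb).injOn] at hg
  refine hg.congr_fun (fun x (hx : 0 < x) => ?_) measurableSet_Ioi
  dsimp only
  rw [smul_eq_mul, abs_of_pos (by positivity)]

lemma integrableOn_Ioi_comp_mul_sub_div (ha : 0 < a) (hb : 0 < b) {g : ℝ → ℝ}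
    (hg : Integrable g) : IntegrableOn (fun x => g (b * x - a / x)) (Ioi 0) := by
  have hbound : ∀ x, ‖x ^ 2 / (b * x ^ 2 + a)‖ ≤ 1 / b := fun x => by
    rw [norm_of_nonneg (by positivity), div_le_div_iff₀ (by positivity) hb]
    nlinarith
  have hcont : Continuous fun x : ℝ => x ^ 2 / (b * x ^ 2 + a) :=
    (continuous_pow 2).div (by fun_prop) fun x => by positivity
  refine IntegrableOn.congr_fun ((integrableOn_Ioi_mul_comp_mul_sub_div ha hb hg).bdd_mul
    hcont.aestronglyMeasurable (ae_of_all _ hbound)) (fun x hx => ?_) measurableSet_Ioi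
  have : x ≠ 0 := ne_of_gt hx
  field_simp

/-- The reflection `x ↦ a / (b x)` of `(0, ∞)` maps `b x - a / x` to its negative. -/
lemma integral_Ioi_div_sq_mul_comp_mul_sub_div_of_even {g : ℝ → ℝ}
    (heven : ∀ u, g (-u) = g u) (ha : 0 < a) (hb : 0 < b) :
    ∫ x in Ioi 0, a / x ^ 2 * g (b * x - a / x) = b * ∫ x in Ioi 0, g (b * x - a / x) := by
  calc ∫ x in Ioi 0, a / x ^ 2 * g (b * x - a / x)
      = ∫ x in Ioi 0, b * ((a / b / x ^ 2) • g (b * (a / b / x) - a / (a / b / x))) := by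
        refine setIntegral_congr_fun measurableSet_Ioi fun x hx => ?_
        have hx : x ≠ 0 := ne_of_gt hx
        rw [smul_eq_mul, show b * (a / b / x) - a / (a / b / x) = -(b * x - a / x) by
          field_simp; ring, heven]
        field_simp
    _ = b * ∫ x in Ioi 0, g (b * x - a / x) := by
        rw [integral_const_mul,
          integral_Ioi_comp_div_left (div_pos ha hb) fun y => g (b * y - a / y)]

theorem integral_Ioi_comp_mul_sub_div_of_even {g : ℝ → ℝ} (hg : Integrable g)
    (heven : ∀ u, g (-u) = g u) (ha : 0 < a) (hb : 0 < b) :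
    ∫ x in Ioi 0, g (b * x - a / x) = (∫ u, g u) / (2 * b) := by
  have hint₁ := integrableOn_Ioi_comp_mul_sub_div ha hb hg
  have hint₂ : IntegrableOn (fun x => a / x ^ 2 * g (b * x - a / x)) (Ioi 0) :=
    ((integrableOn_Ioi_mul_comp_mul_sub_div ha hb hg).sub (hint₁.const_mul b)).congr_fun
      (fun x _ => by simp only [Pi.sub_apply]; ring) measurableSet_Ioi
  rw [integral_eq_integral_Ioi_mul_comp_mul_sub_div ha hb]
  simp only [add_mul]
  rw [integral_add (hint₁.const_mul b) hint₂, integral_const_mul,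
    integral_Ioi_div_sq_mul_comp_mul_sub_div_of_even heven ha hb, eq_div_iff (by positivity)]
  ring

end CauchySchlomilch

theorem integral_Ioi_exp_neg_div_sq_add_mul_sq {a b : ℝ} (ha : 0 ≤ a) (hb : 0 < b) :
    ∫ x in Ioi 0, exp (-((a / x) ^ 2 + (b * x) ^ 2)) = √π / (2 * b) * exp (-(2 * a * b)) := by
  rcases ha.eq_or_lt with rfl | ha
  · have h := integral_gaussian_Ioi (b ^ 2)
    rw [sqrt_div pi_pos.le, sqrt_sq hb.le] at h
    simp only [zero_div, ne_eq, OfNat.ofNat_ne_zero, not_false_eq_true, zero_pow, zero_add,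
      mul_pow, neg_mul, mul_zero, zero_mul, neg_zero, exp_zero, mul_one] at h ⊢
    rw [h]
    ring
  have hsq : ∀ x ≠ 0, exp (-((a / x) ^ 2 + (b * x) ^ 2)) =
      exp (-(2 * a * b)) * exp (-(b * x - a / x) ^ 2) := fun x hx => by
    rw [← exp_add]
    congr 1
    field_simp
    ring
  have hgauss : ∫ u, exp (-u ^ 2) = √π := by simpa using integral_gaussian 1
  rw [setIntegral_congr_fun measurableSet_Ioi fun x hx => hsq x (ne_of_gt hx), integral_const_mul,
    integral_Ioi_comp_mul_sub_div_of_even (g := fun u => exp (-u ^ 2))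
      (by simpa using integrable_exp_neg_mul_sq one_pos) (fun u => by simp) ha hb, hgauss]
  ring

/-- At `c = x²` this is the `N(0, t)` density at `x` times the `Exponential(λ²/2)` density
at `t`. -/
noncomputable def gaussianScaleMixtureIntegrand (lam c t : ℝ) : ℝ :=
  exp (-(1 / 2) * (c / t)) * ((√(2 * π * t))⁻¹ * (lam ^ 2 / 2) * exp (-(lam ^ 2 * t / 2)))

theorem integral_gaussianScaleMixtureIntegrand {lam c : ℝ} (hlam : 0 < lam) (hc : 0 ≤ c) :
    ∫ t in Ioi 0, gaussianScaleMixtureIntegrand lam c t = lam / 2 * exp (-(lam * √c)) := by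
  have h2 : √2 ^ 2 = 2 := sq_sqrt zero_le_two
  have hcsq : √c ^ 2 = c := sq_sqrt hc
  rw [← integral_comp_rpow_Ioi_of_pos zero_lt_two]
  calc ∫ x in Ioi 0, (2 * x ^ ((2 : ℝ) - 1)) • gaussianScaleMixtureIntegrand lam c (x ^ (2 : ℝ))
      = ∫ x in Ioi 0, lam ^ 2 / (√2 * √π) *
          exp (-((√c / √2 / x) ^ 2 + (lam / √2 * x) ^ 2)) := by
        refine setIntegral_congr_fun measurableSet_Ioi fun x (hx : 0 < x) => ?_
        have hsqrt : √(2 * π * x ^ 2) = √2 * √π * x := by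
          rw [sqrt_mul (by positivity), sqrt_mul zero_le_two, sqrt_sq hx.le]
        have hexp : exp (-((√c / √2 / x) ^ 2 + (lam / √2 * x) ^ 2))
            = exp (-(1 / 2) * (c / x ^ 2)) * exp (-(lam ^ 2 * x ^ 2 / 2)) := by
          rw [← exp_add, div_pow, div_pow, mul_pow, div_pow, h2, hcsq]
          ring_nf
        rw [show (2 : ℝ) - 1 = 1 by norm_num, rpow_one, rpow_two, gaussianScaleMixtureIntegrand,
          hsqrt, smul_eq_mul, hexp]
        field_simp
    _ = lam / 2 * exp (-(lam * √c)) := by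
        rw [integral_const_mul, integral_Ioi_exp_neg_div_sq_add_mul_sq (by positivity)
          (by positivity)]
        field_simp
        rw [h2]
        ring_nf

theorem setIntegral_univ_pi_prod {ι α : Type*} [Fintype ι] [MeasureSpace α]
    [SigmaFinite (volume : Measure α)] (s : ι → Set α) (f : ι → α → ℝ) :
    ∫ x in univ.pi s, ∏ i, f i (x i) = ∏ i, ∫ t in s i, f i t := by
  rw [volume_pi, Measure.restrict_pi_pi, integral_fintype_prod_eq_prod]

lemma exp_sub_mul_prod_mul_prod {ι κ : Type*} [Fintype ι] [Fintype κ] (lam : ℝ)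
    (c τ : ι → ℝ) (e ξ : κ → ℝ) :
    exp (-(1 / 2) * (∑ i, c i / τ i) - (1 / 2) * (∑ j, e j / ξ j)) *
        (∏ i, (√(2 * π * τ i))⁻¹ * (lam ^ 2 / 2) * exp (-(lam ^ 2 * τ i / 2))) *
        (∏ j, (√(2 * π * ξ j))⁻¹ * (lam ^ 2 / 2) * exp (-(lam ^ 2 * ξ j / 2))) =
      (∏ i, gaussianScaleMixtureIntegrand lam (c i) (τ i)) *
        ∏ j, gaussianScaleMixtureIntegrand lam (e j) (ξ j) := by
  simp only [gaussianScaleMixtureIntegrand, Finset.prod_mul_distrib, ← exp_sum, ← Finset.mul_sum]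
  rw [sub_eq_add_neg, exp_add, ← neg_mul]
  ring

theorem augmented_density_marginalizes_to_structured_sparse_kernel_general
    (p K L : ℕ) (lam : ℝ) (hlam : 0 < lam)
    (d : Fin K → (Fin p → ℝ))
    (F : Fin L → Matrix (Fin p) (Fin p) ℝ)
    (hFpsd : ∀ ℓ, (F ℓ).PosSemidef)
    (β : Fin p → ℝ) :
    (∫ τ in Set.univ.pi (fun _ : Fin K => Set.Ioi (0 : ℝ)),
      ∫ ξ in Set.univ.pi (fun _ : Fin L => Set.Ioi (0 : ℝ)),
        Real.exp (-(1 / 2) * (∑ k, (d k ⬝ᵥ β) ^ 2 / τ k)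
            - (1 / 2) * (∑ ℓ, (β ⬝ᵥ (F ℓ) *ᵥ β) / ξ ℓ)) *
          (∏ k, (Real.sqrt (2 * Real.pi * τ k))⁻¹ * (lam ^ 2 / 2) *
            Real.exp (-(lam ^ 2 * τ k / 2))) *
          (∏ ℓ, (Real.sqrt (2 * Real.pi * ξ ℓ))⁻¹ * (lam ^ 2 / 2) *
            Real.exp (-(lam ^ 2 * ξ ℓ / 2)))) =
      (lam / 2) ^ (K + L) *
        Real.exp (-(lam * ((∑ k, |d k ⬝ᵥ β|) +
          ∑ ℓ, Real.sqrt (β ⬝ᵥ (F ℓ) *ᵥ β)))) := by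
  have hquad : ∀ ℓ, 0 ≤ β ⬝ᵥ F ℓ *ᵥ β := fun ℓ => by
    simpa using (hFpsd ℓ).dotProduct_mulVec_nonneg β
  simp_rw [exp_sub_mul_prod_mul_prod, integral_const_mul, integral_mul_const,
    setIntegral_univ_pi_prod]
  simp only [integral_gaussianScaleMixtureIntegrand hlam, sq_nonneg, hquad, sqrt_sq_eq_abs,
    Finset.prod_mul_distrib, Finset.prod_const, Finset.card_univ, Fintype.card_fin, ← exp_sum]
  rw [Finset.sum_neg_distrib, Finset.sum_neg_distrib, ← Finset.mul_sum, ← Finset.mul_sum,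
    pow_add, mul_add, neg_add, exp_add]
  ring

/-- Integrating the augmented joint density over the augmentation variables
`{τ_k}` and `{ξ_ℓ}` recovers the structured sparse prior kernel on `β`
(up to the factor `(λ/2)^{K+L}`). -/
theorem augmented_density_marginalizes_to_structured_sparse_kernel
    (p K L : ℕ) (lam : ℝ) (hlam : 0 < lam)
    (d : Fin K → (Fin p → ℝ))
    (F : Fin L → Matrix (Fin p) (Fin p) ℝ)
    (hFsymm : ∀ ℓ, (F ℓ).IsSymm)
    (hFpsd : ∀ ℓ, (F ℓ).PosSemidef)
    (β : Fin p → ℝ) :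
    (∫ τ in Set.univ.pi (fun _ : Fin K => Set.Ioi (0 : ℝ)),
      ∫ ξ in Set.univ.pi (fun _ : Fin L => Set.Ioi (0 : ℝ)),
        Real.exp (-(1 / 2) * (∑ k, (d k ⬝ᵥ β) ^ 2 / τ k)
            - (1 / 2) * (∑ ℓ, (β ⬝ᵥ (F ℓ) *ᵥ β) / ξ ℓ)) *
          (∏ k, (Real.sqrt (2 * Real.pi * τ k))⁻¹ * (lam ^ 2 / 2) *
            Real.exp (-(lam ^ 2 * τ k / 2))) *
          (∏ ℓ, (Real.sqrt (2 * Real.pi * ξ ℓ))⁻¹ * (lam ^ 2 / 2) *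
            Real.exp (-(lam ^ 2 * ξ ℓ / 2)))) =
      (lam / 2) ^ (K + L) *
        Real.exp (-(lam * ((∑ k, |d k ⬝ᵥ β|) +
          ∑ ℓ, Real.sqrt (β ⬝ᵥ (F ℓ) *ᵥ β)))) :=
  augmented_density_marginalizes_to_structured_sparse_kernel_general p K L lam hlam d F hFpsd β
end
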